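/- arXiv:2501.12685 — 3 statements merged into one kernel-verified Lean document; each statement's English description precedes it below -/
import Mathlib

section
/- Let u(x,t) = g(x+1,t) + g(x−1,t) for x ≥ 0, t > 0, where g is the one-dimensional heat kernel. Then ∂_xx ln(u(x,t)) = −1/(2t) + (1/t²)·e^{−x/t}/(1 + e^{−x/t})². In particular ∂_xx ln(u(x,t)) > −1/(2t), and ∂_xx ln(u(x,t)) → −1/(2t) as x → +∞. -/
open Real Filter

/-- The one-dimensional heat kernel. -/
noncomputable def heatKernel (z t : ℝ) : ℝ :=
  (4 * Real.pi * t) ^ (-(1/2) : ℝ) * Real.exp (-z ^ 2 / (4 * t))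

/-- Example 1: solution on a three-edge star graph with symmetric Dirac data. -/
noncomputable def uEx1 (x t : ℝ) : ℝ := heatKernel (x + 1) t + heatKernel (x - 1) t

/-!
Completing the square in both Gaussians gives
`u(x,t) = 2 (4πt)^{-1/2} e^{-(x²+1)/(4t)} cosh(x/(2t))`, so `ln u` is a quadratic in `x` plus
`ln cosh(x/(2t))`. The quadratic contributes `-1/(2t)`, and since `(ln cosh)'' = tanh' = 1/cosh²`
the second term contributes `1/(4t² cosh²(x/(2t)))`, which equals `t⁻² e^{-x/t}/(1 + e^{-x/t})²`.
-/

namespace Real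

theorem hasDerivAt_log_cosh (x : ℝ) : HasDerivAt (fun y => log (cosh y)) (tanh x) x := by
  rw [tanh_eq_sinh_div_cosh]
  exact (hasDerivAt_cosh x).log (cosh_pos x).ne'

theorem hasDerivAt_tanh (x : ℝ) : HasDerivAt tanh (cosh x ^ 2)⁻¹ x := by
  have h := (hasDerivAt_sinh x).div (hasDerivAt_cosh x) (cosh_pos x).ne'
  rw [← sq, ← sq, cosh_sq_sub_sinh_sq, one_div] at h
  rwa [show tanh = sinh / cosh from funext tanh_eq_sinh_div_cosh]

theorem inv_four_mul_cosh_half_sq (s : ℝ) :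
    (4 * cosh (s / 2) ^ 2)⁻¹ = exp (-s) / (1 + exp (-s)) ^ 2 := by
  have h : exp (-s) = (exp (s / 2) ^ 2)⁻¹ := by rw [← exp_nat_mul, ← exp_neg]; ring_nf
  rw [cosh_eq, h, exp_neg]
  have := exp_pos (s / 2)
  field_simp
  ring

theorem tendsto_exp_neg_div_one_add_exp_neg_sq_atTop :
    Tendsto (fun s => exp (-s) / (1 + exp (-s)) ^ 2) atTop (nhds 0) := by
  have h := tendsto_exp_neg_atTop_nhds_zero
  simpa [Pi.div_def] using h.div ((h.const_add 1).pow 2) (by norm_num)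

end Real

theorem uEx1_eq_mul_cosh (x t : ℝ) :
    uEx1 x t =
      2 * (4 * π * t) ^ (-(1/2) : ℝ) * exp (-(x ^ 2 + 1) / (4 * t)) * cosh (x / (2 * t)) := by
  have h_add : exp (-(x + 1) ^ 2 / (4 * t)) =
      exp (-(x ^ 2 + 1) / (4 * t)) * exp (-(x / (2 * t))) := by
    rw [← exp_add]; ring_nf
  have h_sub : exp (-(x - 1) ^ 2 / (4 * t)) =
      exp (-(x ^ 2 + 1) / (4 * t)) * exp (x / (2 * t)) := by
    rw [← exp_add]; ring_nf
  rw [uEx1, heatKernel, heatKernel, h_add, h_sub, cosh_eq]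
  ring

section

variable {t : ℝ}

theorem hasDerivAt_log_uEx1 (ht : 0 < t) (x : ℝ) :
    HasDerivAt (fun z => log (uEx1 z t)) ((tanh (x / (2 * t)) - x) / (2 * t)) x := by
  have hc : 0 < (4 * π * t) ^ (-(1/2) : ℝ) := rpow_pos_of_pos (by positivity) _
  have h_log : (fun z => log (uEx1 z t)) = fun z =>
      log (2 * (4 * π * t) ^ (-(1/2) : ℝ)) + -(z ^ 2 + 1) / (4 * t) + log (cosh (z / (2 * t))) := by
    funext z
    rw [uEx1_eq_mul_cosh, log_mul (by positivity) (cosh_pos _).ne',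
      log_mul (by positivity) (exp_pos _).ne', log_exp]
  have h_quad : HasDerivAt (fun z => -(z ^ 2 + 1) / (4 * t)) (-(2 * x) / (4 * t)) x := by
    simpa using ((hasDerivAt_pow 2 x).add_const 1).neg.div_const (4 * t)
  have h_cosh :
      HasDerivAt (fun z => log (cosh (z / (2 * t)))) (tanh (x / (2 * t)) / (2 * t)) x := by
    have := (hasDerivAt_log_cosh _).comp x ((hasDerivAt_id' x).div_const (2 * t))
    rwa [mul_one_div] at this
  rw [h_log]
  exact (((hasDerivAt_const x _).add h_quad).add h_cosh).congr_deriv (by ring)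

theorem deriv_deriv_log_uEx1 (ht : 0 < t) (x : ℝ) :
    deriv (deriv (fun z => log (uEx1 z t))) x
      = -(1 / (2 * t)) + 1 / t ^ 2 * (exp (-x / t) / (1 + exp (-x / t)) ^ 2) := by
  rw [show deriv (fun z => log (uEx1 z t)) = _ from funext (hasDerivAt_log_uEx1 ht · |>.deriv)]
  have h_tanh : HasDerivAt (fun z => (tanh (z / (2 * t)) - z) / (2 * t))
      (((cosh (x / (2 * t)) ^ 2)⁻¹ * (1 / (2 * t)) - 1) / (2 * t)) x :=
    (((hasDerivAt_tanh _).comp x ((hasDerivAt_id x).div_const (2 * t))).sub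
      (hasDerivAt_id x)).div_const (2 * t)
  rw [h_tanh.deriv, neg_div, ← inv_four_mul_cosh_half_sq, div_div, mul_comm t 2]
  have := cosh_pos (x / (2 * t))
  field_simp
  ring

end

theorem example1_log_second_deriv (t : ℝ) (ht : 0 < t) :
    (∀ x : ℝ, 0 ≤ x →
      deriv (deriv (fun z => Real.log (uEx1 z t))) x
        = -(1 / (2 * t)) + 1 / t ^ 2 * (Real.exp (-x / t) / (1 + Real.exp (-x / t)) ^ 2)) ∧
    (∀ x : ℝ, 0 ≤ x →
      -(1 / (2 * t)) < deriv (deriv (fun z => Real.log (uEx1 z t))) x) ∧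
    Tendsto (fun x => deriv (deriv (fun z => Real.log (uEx1 z t))) x) atTop
      (nhds (-(1 / (2 * t)))) := by
  refine ⟨fun x _ => deriv_deriv_log_uEx1 ht x, fun x _ => ?_, ?_⟩
  · rw [deriv_deriv_log_uEx1 ht x, lt_add_iff_pos_right]
    positivity
  · simp_rw [deriv_deriv_log_uEx1 ht, neg_div]
    have h := tendsto_exp_neg_div_one_add_exp_neg_sq_atTop.comp (tendsto_id.atTop_div_const ht)
    simpa only [mul_zero, add_zero, Function.comp_apply, id] using
      (h.const_mul (1 / t ^ 2)).const_add (-(1 / (2 * t)))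
end

section
/- Let u(x,t) = g(x−1,t) − (1/3)·g(x+1,t) for x ≥ 0, t > 0, where g is the one-dimensional heat kernel. Then u(x,t) > 0 and ∂_xx ln(u(x,t)) = −1/(2t) − (1/t²)·((1/3)e^{−x/t})/(1 − (1/3)e^{−x/t})². -/
open Real

/-- Example 2: solution on the third edge of a three-edge star graph with
a Dirac mass at distance 1 on the third edge only. -/
noncomputable def uEx2 (x t : ℝ) : ℝ :=
  heatKernel (x - 1) t - (1 / 3) * heatKernel (x + 1) t

/-!
Since `(x + 1)² - (x - 1)² = 4x`, the reflected kernel is `g(x + 1, t) = g(x - 1, t) e^{-x/t}`, so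
`u = g(x - 1, t) (1 - e^{-x/t}/3)`. For `x ≥ 0` the second factor is at least `2/3`, hence `u > 0`,
and `ln u` splits into the Gaussian part, a quadratic in `x` with second derivative `-1/(2t)`, plus
`ln (1 - w)` with `w = e^{-x/t}/3`. As `w' = -w/t`, the latter has derivative `w / (t (1 - w))` and
second derivative `-(1/t²) w / (1 - w)²`.
-/

open Filter Topology

lemma heatKernel_pos {t : ℝ} (ht : 0 < t) (z : ℝ) : 0 < heatKernel z t :=
  mul_pos (rpow_pos_of_pos (by positivity) _) (exp_pos _)

lemma heatKernel_add_eq_mul_exp (z c : ℝ) {t : ℝ} (ht : t ≠ 0) :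
    heatKernel (z + c) t = heatKernel (z - c) t * exp (-(c * z) / t) := by
  rw [heatKernel, heatKernel, mul_assoc (_ ^ _), ← exp_add]
  congr 2
  field_simp
  ring

lemma log_heatKernel (z : ℝ) {t : ℝ} (ht : 0 < t) :
    log (heatKernel z t) = -(1 / 2) * log (4 * π * t) - z ^ 2 / (4 * t) := by
  rw [heatKernel, log_mul (rpow_pos_of_pos (by positivity) _).ne' (exp_pos _).ne',
    log_rpow (by positivity), log_exp]
  ring

lemma uEx2_eq_mul (x : ℝ) {t : ℝ} (ht : t ≠ 0) :
    uEx2 x t = heatKernel (x - 1) t * (1 - 1 / 3 * exp (-x / t)) := by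
  rw [uEx2, heatKernel_add_eq_mul_exp x 1 ht, one_mul]
  ring

lemma uEx2_pos {z t : ℝ} (ht : 0 < t) (hz : 1 / 3 * exp (-z / t) < 1) : 0 < uEx2 z t := by
  rw [uEx2_eq_mul z ht.ne']
  exact mul_pos (heatKernel_pos ht _) (sub_pos.2 hz)

lemma log_uEx2_eq {z t : ℝ} (ht : 0 < t) (hz : 1 / 3 * exp (-z / t) < 1) :
    log (uEx2 z t)
      = -(1 / 2) * log (4 * π * t) - (z - 1) ^ 2 / (4 * t) + log (1 - 1 / 3 * exp (-z / t)) := by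
  rw [uEx2_eq_mul z ht.ne', log_mul (heatKernel_pos ht _).ne' (sub_pos.2 hz).ne',
    log_heatKernel _ ht]

lemma eventually_mul_exp_lt_one {a z t : ℝ} (h : a * exp (-z / t) < 1) :
    ∀ᶠ y in 𝓝 z, a * exp (-y / t) < 1 :=
  (by fun_prop : ContinuousAt (fun y => a * exp (-y / t)) z).eventually_lt continuousAt_const h

lemma hasDerivAt_log_one_sub_mul_exp (a t z : ℝ) (h : a * exp (-z / t) ≠ 1) :
    HasDerivAt (fun y => log (1 - a * exp (-y / t)))
      (a * exp (-z / t) / (t * (1 - a * exp (-z / t)))) z := by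
  have h' : 1 - a * exp (-z / t) ≠ 0 := sub_ne_zero.2 h.symm
  have hw := ((hasDerivAt_id z).neg.div_const t).exp.const_mul a
  refine ((hw.const_sub 1).log h').congr_deriv ?_
  simp only [Pi.neg_apply, id]
  field_simp

lemma hasDerivAt_mul_exp_div_one_sub (a z : ℝ) {t : ℝ} (ht : t ≠ 0)
    (h : a * exp (-z / t) ≠ 1) :
    HasDerivAt (fun y => a * exp (-y / t) / (t * (1 - a * exp (-y / t))))
      (-(1 / t ^ 2) * (a * exp (-z / t) / (1 - a * exp (-z / t)) ^ 2)) z := by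
  have h' : 1 - a * exp (-z / t) ≠ 0 := sub_ne_zero.2 h.symm
  have hw := ((hasDerivAt_id z).neg.div_const t).exp.const_mul a
  refine (hw.div ((hw.const_sub 1).const_mul t) (mul_ne_zero ht h')).congr_deriv ?_
  simp only [Pi.neg_apply, id]
  field_simp
  ring

lemma hasDerivAt_log_uEx2 {z t : ℝ} (ht : 0 < t) (hz : 1 / 3 * exp (-z / t) < 1) :
    HasDerivAt (fun y => log (uEx2 y t))
      (-(z - 1) / (2 * t) + 1 / 3 * exp (-z / t) / (t * (1 - 1 / 3 * exp (-z / t)))) z := by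
  have hgauss : HasDerivAt (fun y : ℝ => -(1 / 2) * log (4 * π * t) - (y - 1) ^ 2 / (4 * t))
      (-(z - 1) / (2 * t)) z := by
    refine ((hasDerivAt_const z _).sub
      ((((hasDerivAt_id z).sub_const 1).pow 2).div_const (4 * t))).congr_deriv ?_
    simp only [id]
    field_simp
    ring
  refine (hgauss.add (hasDerivAt_log_one_sub_mul_exp _ _ _ hz.ne)).congr_of_eventuallyEq ?_
  filter_upwards [eventually_mul_exp_lt_one hz] with y hy using log_uEx2_eq ht hy

theorem example2_log_second_deriv (x t : ℝ) (hx : 0 ≤ x) (ht : 0 < t) :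
    0 < uEx2 x t ∧
      deriv (deriv (fun z => Real.log (uEx2 z t))) x
        = -(1 / (2 * t))
            - 1 / t ^ 2 * ((1 / 3) * Real.exp (-x / t) / (1 - (1 / 3) * Real.exp (-x / t)) ^ 2) := by
  have hsmall : 1 / 3 * exp (-x / t) < 1 := by
    have : exp (-x / t) ≤ 1 :=
      exp_le_one_iff.2 (div_nonpos_of_nonpos_of_nonneg (neg_nonpos.2 hx) ht.le)
    linarith
  refine ⟨uEx2_pos ht hsmall, ?_⟩
  have hderiv : deriv (fun y => log (uEx2 y t)) =ᶠ[𝓝 x]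
      fun y => -(y - 1) / (2 * t) + 1 / 3 * exp (-y / t) / (t * (1 - 1 / 3 * exp (-y / t))) := by
    filter_upwards [eventually_mul_exp_lt_one hsmall] with y hy
    exact (hasDerivAt_log_uEx2 ht hy).deriv
  rw [hderiv.deriv_eq]
  refine ((((hasDerivAt_id x).sub_const 1).neg.div_const (2 * t)).add
    (hasDerivAt_mul_exp_div_one_sub _ _ ht.ne' hsmall.ne)).deriv.trans ?_
  ring
end

section
/- The star-graph heat kernel satisfies the Kirchhoff vertex conditions: for each fixed y on edge j and t > 0, the functions x ↦ Γ_i(x,y,t) agree at x = 0 for all edges i (continuity at the vertex), and Σ_{i=1}^N α_i ∂_x Γ_i(0,y,t) = 0. -/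
open Real Finset

/-- The star-graph heat kernel `Γ_i(x,y,t)` for `y` on edge `j`. -/
noncomputable def starKernel {N : ℕ} (α : Fin N → ℝ) (i j : Fin N) (x y t : ℝ) : ℝ :=
  if j = i then heatKernel (x - y) t + (2 * α i - 1) * heatKernel (x + y) t
  else 2 * α j * heatKernel (x + y) t

/-!
At the vertex the direct term `g(x - y)` and the reflected term `g(x + y)` coincide, so every
edge sees the value `2 α_j g(y)`. Since `g` is even, its derivative is odd, so `∂_x Γ_i(0,y,t)` is
`2 (α_j - δ_ij) g'(y)`, and `Σ_i α_i (α_j - δ_ij) = α_j Σ_i α_i - α_j = 0`.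
-/

lemma heatKernel_neg (z t : ℝ) : heatKernel (-z) t = heatKernel z t := by
  simp only [heatKernel, neg_sq]

lemma hasDerivAt_heatKernel (z t : ℝ) :
    HasDerivAt (fun z => heatKernel z t) (-z / (2 * t) * heatKernel z t) z := by
  have h := ((((hasDerivAt_id' z).pow 2).neg.div_const (4 * t)).exp).const_mul
    ((4 * Real.pi * t) ^ (-(1/2) : ℝ))
  refine h.congr_deriv ?_
  simp only [heatKernel, Pi.neg_apply, Pi.pow_apply, Nat.cast_ofNat, mul_one]
  ring

lemma starKernel_zero {N : ℕ} (α : Fin N → ℝ) (i j : Fin N) (y t : ℝ) :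
    starKernel α i j 0 y t = 2 * α j * heatKernel y t := by
  unfold starKernel
  split_ifs with h
  · subst h
    rw [zero_sub, heatKernel_neg, zero_add]
    ring
  · rw [zero_add]

lemma hasDerivAt_starKernel_zero {N : ℕ} (α : Fin N → ℝ) (i j : Fin N) (y t : ℝ) :
    HasDerivAt (fun x => starKernel α i j x y t)
      (2 * (α j - if j = i then 1 else 0) * (-y / (2 * t) * heatKernel y t)) 0 := by
  have hplus : HasDerivAt (fun x => heatKernel (x + y) t) (-y / (2 * t) * heatKernel y t) 0 :=
    (hasDerivAt_heatKernel (0 + y) t).comp_add_const 0 y |>.congr_deriv (by rw [zero_add])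
  have hminus : HasDerivAt (fun x => heatKernel (x - y) t) (y / (2 * t) * heatKernel y t) 0 :=
    (hasDerivAt_heatKernel (0 - y) t).comp_sub_const 0 y
      |>.congr_deriv (by rw [zero_sub, heatKernel_neg]; ring)
  unfold starKernel
  split_ifs with h
  · subst h
    exact (hminus.add (hplus.const_mul (2 * α j - 1))).congr_deriv (by ring)
  · exact (hplus.const_mul (2 * α j)).congr_deriv (by ring)

lemma sum_mul_sub_indicator_eq_zero {ι R : Type*} [Fintype ι] [DecidableEq ι] [CommRing R]
    (α : ι → R) (hα : ∑ i, α i = 1) (j : ι) : ∑ i, α i * (α j - if j = i then 1 else 0) = 0 := by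
  simp only [mul_sub, mul_ite, mul_one, mul_zero, Finset.sum_sub_distrib, Finset.sum_ite_eq,
    Finset.mem_univ, if_true, ← Finset.sum_mul, hα, one_mul, sub_self]

theorem starKernel_kirchhoff_general {N : ℕ} (α : Fin N → ℝ)
    (hαsum : ∑ j : Fin N, α j = 1)
    (j : Fin N) (y t : ℝ) :
    (∀ i i' : Fin N, starKernel α i j 0 y t = starKernel α i' j 0 y t) ∧
      ∑ i : Fin N, α i * deriv (fun x => starKernel α i j x y t) 0 = 0 := by
  refine ⟨fun i i' => by rw [starKernel_zero, starKernel_zero], ?_⟩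
  set g' := -y / (2 * t) * heatKernel y t
  calc ∑ i, α i * deriv (fun x => starKernel α i j x y t) 0
      = ∑ i, α i * (2 * (α j - if j = i then 1 else 0) * g') := by
        simp only [(hasDerivAt_starKernel_zero α _ j y t).deriv, g']
    _ = 2 * g' * ∑ i, α i * (α j - if j = i then 1 else 0) := by
        rw [Finset.mul_sum]
        exact Finset.sum_congr rfl fun i _ => by ring
    _ = 0 := by rw [sum_mul_sub_indicator_eq_zero α hαsum j, mul_zero]

/-- The star-graph heat kernel satisfies the Kirchhoff vertex conditions. -/
theorem starKernel_kirchhoff {N : ℕ} (α : Fin N → ℝ)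
    (hα : ∀ j, 0 < α j) (hαsum : ∑ j : Fin N, α j = 1)
    (j : Fin N) (y t : ℝ) (hy : 0 ≤ y) (ht : 0 < t) :
    (∀ i i' : Fin N, starKernel α i j 0 y t = starKernel α i' j 0 y t) ∧
      ∑ i : Fin N, α i * deriv (fun x => starKernel α i j x y t) 0 = 0 :=
  starKernel_kirchhoff_general α hαsum j y t
end
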